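/- arXiv:1509.02963 — 3 statements merged into one kernel-verified Lean document; each statement's English description precedes it below -/
import Mathlib

section
/- Let G be a finite connected graph with genus g, let f_1, ..., f_{g-1} be edges such that G' = G − {f_1, ..., f_{g-1}} is connected, and let C be the unique cycle of G'. Then for any edge f of G, the orthogonal projection π(f) of f onto the cycle space H_1(G,ℝ) lies in the span of π(f_1), ..., π(f_{g-1}) if and only if f is not an edge of C. -/
open scoped Classical

variable {V E : Type} [Fintype V] [Fintype E] [DecidableEq V] [DecidableEq E]

/-- Reachability between vertices using (undirected) edges from the set `A`. -/
def ReachIn (ι : E → V × V) (A : Set E) (a b : V) : Prop :=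
  Relation.ReflTransGen (fun x y => ∃ e ∈ A, ι e = (x, y) ∨ ι e = (y, x)) a b

/-- The graph with edge set `A` (on all of `V`) is connected. -/
def Conn (ι : E → V × V) (A : Set E) : Prop := ∀ a b : V, ReachIn ι A a b

/-- `C : E → ℤ` is the signed indicator vector of a (simple, directed) cycle:
entries in `{-1,0,1}`, nonempty support, zero boundary, every vertex meets
0 or 2 support edges, and the support is connected. -/
def IsCycleVec (ι : E → V × V) (C : E → ℤ) : Prop :=
  (∀ e, C e = 0 ∨ C e = 1 ∨ C e = -1) ∧
  (∃ e, C e ≠ 0) ∧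
  (∀ v : V, ∑ e : E, C e *
      ((if (ι e).2 = v then 1 else 0) - (if (ι e).1 = v then 1 else 0)) = 0) ∧
  (∀ v : V,
    (Finset.univ.filter fun e => C e ≠ 0 ∧ ((ι e).1 = v ∨ (ι e).2 = v)).card = 0 ∨
    (Finset.univ.filter fun e => C e ≠ 0 ∧ ((ι e).1 = v ∨ (ι e).2 = v)).card = 2) ∧
  (∀ a b : V, (∃ e, C e ≠ 0 ∧ ((ι e).1 = a ∨ (ι e).2 = a)) →
    (∃ e, C e ≠ 0 ∧ ((ι e).1 = b ∨ (ι e).2 = b)) →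
    ReachIn ι {e | C e ≠ 0} a b)

/-- The standard basis vector of an edge in the real edge space. -/
noncomputable def edgeVec (f : E) : EuclideanSpace ℝ E := EuclideanSpace.single f 1

/-- The real vector of an integral cycle vector. -/
def cycVecR (C : E → ℤ) : EuclideanSpace ℝ E := WithLp.toLp 2 (fun e => ((C e : ℝ)))

/-- The cycle space `H₁(G,ℝ)`: the span of the signed cycle vectors. -/
noncomputable def cycleSpace (ι : E → V × V) : Submodule ℝ (EuclideanSpace ℝ E) :=
  Submodule.span ℝ {x | ∃ C : E → ℤ, IsCycleVec ι C ∧ x = cycVecR C}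

/-- `π(f)`: the orthogonal projection of the edge basis vector onto the cycle space. -/
noncomputable def projCyc (ι : E → V × V) (f : E) : EuclideanSpace ℝ E :=
  (Submodule.orthogonalProjectionOnto (cycleSpace ι) (edgeVec f) : EuclideanSpace ℝ E)

/-! For `x` in the cycle space `H`, `⟪π(g), x⟫ = x_g`. Hence `π(f)` lies in the span of the
`π(f')`, `f' ∈ S`, iff `x_f = 0` for every `x ∈ H` vanishing on `S`. Such `x` are cycles of `G'`:
by rank–nullity for the boundary map of the connected graph `G'`, which has `|V|` edges, they
form a space of dimension at most one, hence are the multiples of `C`, and the condition reads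
`C_f = 0`. -/

theorem Submodule.starProjection_mem_span_image_iff {𝕜 F : Type*} [RCLike 𝕜]
    [NormedAddCommGroup F] [InnerProductSpace 𝕜 F] (K : Submodule 𝕜 F) [K.HasOrthogonalProjection]
    {s : Set F} (hs : s.Finite) (v : F) :
    K.starProjection v ∈ span 𝕜 (K.starProjection '' s) ↔
      ∀ x ∈ K, (∀ w ∈ s, inner 𝕜 w x = 0) → inner 𝕜 v x = 0 := by
  have inner_eq (u x : F) (hx : x ∈ K) : inner 𝕜 (K.starProjection u) x = inner 𝕜 u x := by
    rw [inner_starProjection_left_eq_right, starProjection_eq_self_iff.mpr hx]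
  set W := span 𝕜 (K.starProjection '' s)
  have : FiniteDimensional 𝕜 W := FiniteDimensional.span_of_finite 𝕜 (hs.image _)
  have hWK : W ≤ K := span_le.mpr <| by rintro _ ⟨w, -, rfl⟩; exact K.starProjection_apply_mem w
  constructor
  · intro hv x hxK hxs
    have hxW : x ∈ Wᗮ := (mem_orthogonal _ _).mpr fun u hu =>
      mem_orthogonal_singleton_iff_inner_left.mp <| span_le.mpr (by
        rintro _ ⟨w, hw, rfl⟩
        exact mem_orthogonal_singleton_iff_inner_left.mpr ((inner_eq w x hxK).trans (hxs w hw))) hu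
    rw [← inner_eq v x hxK]
    exact inner_right_of_mem_orthogonal hv hxW
  · intro h
    -- the component of `K.starProjection v` orthogonal to `W` is orthogonal to `s`, hence to `v`,
    -- hence zero
    set d := K.starProjection v - W.starProjection (K.starProjection v)
    have hdW : d ∈ Wᗮ := W.sub_starProjection_mem_orthogonal _
    have hdK : d ∈ K := sub_mem (K.starProjection_apply_mem v) (hWK (W.starProjection_apply_mem _))
    have hvd : inner 𝕜 v d = 0 := h d hdK fun w hw => by
      rw [← inner_eq w d hdK]
      exact inner_right_of_mem_orthogonal (subset_span (Set.mem_image_of_mem _ hw)) hdW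
    have hd : d = 0 := by
      rw [← inner_self_eq_zero (𝕜 := 𝕜)]
      calc inner 𝕜 d d
          = inner 𝕜 (K.starProjection v) d - inner 𝕜 (W.starProjection (K.starProjection v)) d :=
            inner_sub_left _ _ _
        _ = 0 := by
          rw [inner_eq v d hdK, hvd,
            inner_right_of_mem_orthogonal (W.starProjection_apply_mem _) hdW, sub_zero]
    rw [sub_eq_zero.mp hd]
    exact W.starProjection_apply_mem _

theorem Submodule.finrank_inf_ker_add_finrank_map {K M N : Type*} [Field K] [AddCommGroup M]
    [Module K M] [AddCommGroup N] [Module K N] (f : M →ₗ[K] N) (P : Submodule K M)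
    [FiniteDimensional K P] :
    Module.finrank K ↥(P ⊓ LinearMap.ker f) + Module.finrank K (P.map f) = Module.finrank K P := by
  have hker : LinearMap.ker (f.domRestrict P) = (P ⊓ LinearMap.ker f).comap P.subtype := by
    rw [LinearMap.ker_domRestrict, Submodule.comap_inf, Submodule.comap_subtype_self, top_inf_eq]
  rw [← LinearMap.range_domRestrict, ← (f.domRestrict P).finrank_range_add_finrank_ker, hker,
    (Submodule.comapSubtypeEquivOfLe inf_le_left).finrank_eq, add_comm]

theorem card_le_finrank_add_one_of_single_sub_mem {K : Type*} [Field K]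
    {R : Submodule K (V → K)} (h : ∀ a b : V, Pi.single b 1 - Pi.single a 1 ∈ R) :
    Fintype.card V ≤ Module.finrank K R + 1 := by
  rcases isEmpty_or_nonempty V with hV | ⟨⟨v₀⟩⟩
  · simp
  have htop : R ⊔ K ∙ Pi.single v₀ 1 = ⊤ := by
    rw [eq_top_iff, ← (Pi.basisFun K V).span_eq, Submodule.span_le]
    rintro _ ⟨v, rfl⟩
    rw [Pi.basisFun_apply, ← sub_add_cancel (Pi.single v 1) (Pi.single v₀ 1)]
    exact add_mem (Submodule.mem_sup_left (h v₀ v))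
      (Submodule.mem_sup_right (Submodule.mem_span_singleton_self _))
  calc Fintype.card V = Module.finrank K ↥(R ⊔ K ∙ Pi.single v₀ 1) := by
        rw [htop, finrank_top, Module.finrank_fintype_fun_eq_card]
    _ ≤ Module.finrank K R + Module.finrank K ↥(K ∙ (Pi.single v₀ 1 : V → K)) :=
        Submodule.finrank_add_le_finrank_add_finrank _ _
    _ = Module.finrank K R + 1 := by rw [finrank_span_singleton (by simp)]

noncomputable def boundary (ι : E → V × V) : EuclideanSpace ℝ E →ₗ[ℝ] V → ℝ where
  toFun x v := ∑ e, x e * ((if (ι e).2 = v then 1 else 0) - (if (ι e).1 = v then 1 else 0))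
  map_add' x y := by
    funext v
    simp [add_mul, Finset.sum_add_distrib]
  map_smul' c x := by
    funext v
    simp [Finset.mul_sum, mul_assoc]

omit [Fintype V] in
theorem boundary_edgeVec (ι : E → V × V) (e : E) :
    boundary ι (edgeVec e) = Pi.single (ι e).2 1 - Pi.single (ι e).1 1 := by
  funext v
  simp only [boundary, edgeVec, LinearMap.coe_mk, AddHom.coe_mk, PiLp.single_apply]
  rw [Finset.sum_eq_single e (fun b _ hb => by simp [hb]) (by simp)]
  simp [Pi.single_apply, eq_comm]

omit [Fintype V] [DecidableEq E] in
theorem boundary_cycVecR {ι : E → V × V} {C : E → ℤ} (hC : IsCycleVec ι C) :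
    boundary ι (cycVecR C) = 0 := by
  funext v
  have h := congrArg (Int.cast : ℤ → ℝ) (hC.2.2.1 v)
  push_cast at h
  simpa [boundary, cycVecR] using h

omit [Fintype V] [DecidableEq E] in
theorem cycVecR_mem_cycleSpace {ι : E → V × V} {C : E → ℤ} (hC : IsCycleVec ι C) :
    cycVecR C ∈ cycleSpace ι :=
  Submodule.subset_span ⟨C, hC, rfl⟩

omit [Fintype V] [DecidableEq E] in
theorem cycVecR_ne_zero {ι : E → V × V} {C : E → ℤ} (hC : IsCycleVec ι C) : cycVecR C ≠ 0 := by
  obtain ⟨e, he⟩ := hC.2.1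
  intro h
  apply he
  simpa [cycVecR] using congrArg (fun x : EuclideanSpace ℝ E => x e) h

omit [Fintype V] [DecidableEq E] in
theorem cycleSpace_le_ker_boundary (ι : E → V × V) :
    cycleSpace ι ≤ LinearMap.ker (boundary ι) := by
  rw [cycleSpace, Submodule.span_le]
  rintro _ ⟨C, hC, rfl⟩
  exact boundary_cycVecR hC

def vanishingOn (S : Finset E) : Submodule ℝ (EuclideanSpace ℝ E) :=
  LinearMap.ker
    (LinearMap.funLeft ℝ ℝ ((↑) : S → E) ∘ₗ (WithLp.linearEquiv 2 ℝ (E → ℝ)).toLinearMap)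

omit [Fintype E] [DecidableEq E] in
theorem mem_vanishingOn {S : Finset E} {x : EuclideanSpace ℝ E} :
    x ∈ vanishingOn S ↔ ∀ e ∈ S, x e = 0 := by
  simp [vanishingOn, funext_iff]

omit [DecidableEq E] in
theorem finrank_vanishingOn_add_card (S : Finset E) :
    Module.finrank ℝ (vanishingOn S) + S.card = Fintype.card E := by
  set ρ := LinearMap.funLeft ℝ ℝ ((↑) : S → E) ∘ₗ (WithLp.linearEquiv 2 ℝ (E → ℝ)).toLinearMap
  have hρ : LinearMap.range ρ = ⊤ := LinearMap.range_eq_top.mpr fun y => by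
    obtain ⟨g, rfl⟩ := LinearMap.funLeft_surjective_of_injective ℝ ℝ _ Subtype.val_injective y
    exact ⟨WithLp.toLp 2 g, rfl⟩
  have hrank := ρ.finrank_range_add_finrank_ker
  rw [hρ, finrank_top, Module.finrank_fintype_fun_eq_card, Fintype.card_coe,
    finrank_euclideanSpace] at hrank
  exact (add_comm _ _).trans hrank

omit [Fintype E] in
theorem edgeVec_mem_vanishingOn {S : Finset E} {e : E} (he : e ∉ S) : edgeVec e ∈ vanishingOn S :=
  mem_vanishingOn.mpr fun e' he' => by
    simp [edgeVec, show e' ≠ e from fun h => he (h ▸ he')]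

theorem inner_edgeVec_left (e : E) (x : EuclideanSpace ℝ E) : inner ℝ (edgeVec e) x = x e := by
  simp [edgeVec, EuclideanSpace.inner_single_left]

omit [Fintype V] in
theorem single_sub_single_mem_map_boundary {ι : E → V × V} {S : Finset E} {a b : V}
    (h : ReachIn ι {e | e ∉ S} a b) :
    Pi.single b 1 - Pi.single a 1 ∈ (vanishingOn S).map (boundary ι) := by
  induction h with
  | refl => simp
  | @tail c d _ hcd ih =>
    obtain ⟨e, he, hιe⟩ := hcd
    have hedge : Pi.single (ι e).2 1 - Pi.single (ι e).1 1 ∈ (vanishingOn S).map (boundary ι) :=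
      ⟨edgeVec e, edgeVec_mem_vanishingOn he, boundary_edgeVec ι e⟩
    rw [← sub_add_sub_cancel _ (Pi.single c 1)]
    refine add_mem ?_ ih
    rcases hιe with h | h <;> rw [h] at hedge
    · exact hedge
    · simpa using neg_mem hedge

theorem finrank_vanishingOn_inf_ker_boundary_le {ι : E → V × V} {S : Finset E}
    (hconn : Conn ι {e | e ∉ S}) :
    Module.finrank ℝ ↥(vanishingOn S ⊓ LinearMap.ker (boundary ι)) + Fintype.card V + S.card ≤
      Fintype.card E + 1 := by
  have hrank := Submodule.finrank_inf_ker_add_finrank_map (boundary ι) (vanishingOn S)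
  have hV := card_le_finrank_add_one_of_single_sub_mem (R := (vanishingOn S).map (boundary ι))
    fun a b => single_sub_single_mem_map_boundary (hconn a b)
  have hS := finrank_vanishingOn_add_card S
  omega

theorem vanishingOn_inf_cycleSpace_eq_span {ι : E → V × V} {S : Finset E}
    (hconn : Conn ι {e | e ∉ S}) (hcard : S.card + Fintype.card V = Fintype.card E)
    {C : E → ℤ} (hC : IsCycleVec ι C) (hCS : ∀ e ∈ S, C e = 0) :
    vanishingOn S ⊓ cycleSpace ι = ℝ ∙ cycVecR C := by
  have hC_le : ℝ ∙ cycVecR C ≤ vanishingOn S ⊓ cycleSpace ι :=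
    (Submodule.span_singleton_le_iff_mem _ _).mpr
      ⟨mem_vanishingOn.mpr fun e he => by simp [cycVecR, hCS e he], cycVecR_mem_cycleSpace hC⟩
  have hle_ker : vanishingOn S ⊓ cycleSpace ι ≤ vanishingOn S ⊓ LinearMap.ker (boundary ι) :=
    inf_le_inf_left _ (cycleSpace_le_ker_boundary ι)
  have heq : ℝ ∙ cycVecR C = vanishingOn S ⊓ LinearMap.ker (boundary ι) := by
    refine Submodule.eq_of_le_of_finrank_le (hC_le.trans hle_ker) ?_
    have := finrank_vanishingOn_inf_ker_boundary_le (ι := ι) hconn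
    rw [finrank_span_singleton (cycVecR_ne_zero hC)]
    omega
  exact le_antisymm (heq ▸ hle_ker) hC_le

theorem proj_mem_span_iff_not_on_cycle_general (ι : E → V × V)
    (S : Finset E)
    (hcard : (S.card : ℤ) = (Fintype.card E : ℤ) - (Fintype.card V : ℤ))
    (hconn' : Conn ι {e | e ∉ S})
    (C : E → ℤ) (hC : IsCycleVec ι C) (hCS : ∀ e ∈ S, C e = 0)
    (f : E) :
    projCyc ι f ∈ Submodule.span ℝ (projCyc ι '' (S : Set E)) ↔ C f = 0 := by
  have hproj : projCyc ι = (cycleSpace ι).starProjection ∘ edgeVec := rfl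
  rw [hproj, Set.image_comp, Function.comp_apply,
    Submodule.starProjection_mem_span_image_iff _ (S.finite_toSet.image _)]
  simp only [Set.forall_mem_image, inner_edgeVec_left]
  calc (∀ x ∈ cycleSpace ι, (∀ e ∈ S, x e = 0) → x f = 0)
      ↔ ∀ x ∈ vanishingOn S ⊓ cycleSpace ι, x f = 0 := by
        simp only [Submodule.mem_inf, mem_vanishingOn, and_imp]
        exact forall_congr' fun _ => Imp.swap
    _ ↔ ∀ x ∈ ℝ ∙ cycVecR C, x f = 0 := by
        rw [vanishingOn_inf_cycleSpace_eq_span hconn' (by omega) hC hCS]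
    _ ↔ C f = 0 := by
        simp only [cycVecR, Submodule.mem_span_singleton, forall_exists_index,
          forall_apply_eq_imp_iff, PiLp.smul_apply, smul_eq_mul, mul_eq_zero, Int.cast_eq_zero]
        exact ⟨fun h => (h 1).resolve_left one_ne_zero, fun h _ => Or.inr h⟩

/-- if removing the `g-1` edges of `S` from the connected graph `G` leaves a
connected graph `G'` whose unique cycle is `C`, then for any edge `f`, `π(f)` lies in the
span of `{π(f') : f' ∈ S}` iff `f` is not an edge of `C`. -/
theorem proj_mem_span_iff_not_on_cycle (ι : E → V × V)
    (hconn : Conn ι Set.univ) (S : Finset E)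
    (hcard : (S.card : ℤ) = (Fintype.card E : ℤ) - (Fintype.card V : ℤ))
    (hconn' : Conn ι {e | e ∉ S})
    (C : E → ℤ) (hC : IsCycleVec ι C) (hCS : ∀ e ∈ S, C e = 0)
    (f : E) :
    projCyc ι f ∈ Submodule.span ℝ (projCyc ι '' (S : Set E)) ↔ C f = 0 :=
  proj_mem_span_iff_not_on_cycle_general ι S hcard hconn' C hC hCS f
end

section
/- Let 𝔠 be an acyclic cycle orientation configuration on a finite connected graph G. Starting from any orientation O and repeatedly reversing a directed cycle not oriented as in 𝔠, the process terminates; hence every cycle reversal class contains a 𝔠-faithful orientation. -/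
open scoped Classical

variable {V E : Type} [Fintype V] [Fintype E] [DecidableEq V] [DecidableEq E]

/-- An orientation of `G`, recorded as a sign for each edge relative to the reference
orientation `ι`. -/
def IsOrient (σ : E → ℤ) : Prop := ∀ e, σ e = 1 ∨ σ e = -1

/-- `C` is a directed cycle of the orientation `σ`. -/
def DirCycle (ι : E → V × V) (σ : E → ℤ) (C : E → ℤ) : Prop :=
  IsCycleVec ι C ∧ ∀ e, C e ≠ 0 → C e = σ e

/-- One cycle reversal step: reverse all edges of a directed cycle of `σ`. -/
def RevStep (ι : E → V × V) (σ τ : E → ℤ) : Prop :=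
  ∃ C : E → ℤ, DirCycle ι σ C ∧ ∀ e, τ e = if C e ≠ 0 then -σ e else σ e

/-- A cycle orientation configuration: a choice, for each cycle of `G`, of exactly one of
its two orientations. -/
def IsConfig (ι : E → V × V) (𝔠 : Set (E → ℤ)) : Prop :=
  (∀ C ∈ 𝔠, IsCycleVec ι C) ∧
  (∀ C : E → ℤ, IsCycleVec ι C → (C ∈ 𝔠 ↔ (fun e => -C e) ∉ 𝔠))

/-- Acyclicity of a configuration: no nontrivial nonnegative integer combination of its
oriented cycle vectors vanishes. -/
def ConfigAcyclic (𝔠 : Set (E → ℤ)) : Prop :=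
  ∀ (k : ℕ) (Cs : Fin k → E → ℤ) (n : Fin k → ℕ),
    (∀ i, Cs i ∈ 𝔠) → (∀ e, ∑ i, (n i : ℤ) * Cs i e = 0) → ∀ i, n i = 0

/-- `σ` is `𝔠`-faithful: every directed cycle of `σ` is oriented as prescribed by `𝔠`. -/
def Faithful (ι : E → V × V) (𝔠 : Set (E → ℤ)) (σ : E → ℤ) : Prop :=
  ∀ C : E → ℤ, DirCycle ι σ C → C ∈ 𝔠

/-- A "bad" reversal step: reversing a directed cycle of `σ` that is *not* oriented as
prescribed by `𝔠`. -/
def BadStep (ι : E → V × V) (𝔠 : Set (E → ℤ)) (σ τ : E → ℤ) : Prop :=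
  ∃ C : E → ℤ, DirCycle ι σ C ∧ C ∉ 𝔠 ∧ ∀ e, τ e = if C e ≠ 0 then -σ e else σ e

/-- for an acyclic configuration `𝔠`, repeatedly reversing directed cycles
not oriented as in `𝔠` always terminates (there is no infinite sequence of bad steps), and
consequently every cycle reversal class contains a `𝔠`-faithful orientation. -/
theorem faithful_orientation_exists (ι : E → V × V) (hconn : Conn ι Set.univ)
    (𝔠 : Set (E → ℤ)) (hcfg : IsConfig ι 𝔠) (hacyc : ConfigAcyclic 𝔠)
    (σ : E → ℤ) (hσ : IsOrient σ) :
    (¬ ∃ f : ℕ → E → ℤ, f 0 = σ ∧ ∀ k, BadStep ι 𝔠 (f k) (f (k + 1))) ∧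
    (∃ τ : E → ℤ, Relation.ReflTransGen (RevStep ι) σ τ ∧ Faithful ι 𝔠 τ) := by
  have orient_step : ∀ (σ τ : E → ℤ), IsOrient σ → BadStep ι 𝔠 σ τ → IsOrient τ := by
    rintro σ τ hσ ⟨C, hC, hCn, hτ⟩ e
    rw [hτ e]
    rcases hσ e with h | h <;> split <;> simp [h]
  have part1 : ¬ ∃ f : ℕ → E → ℤ, f 0 = σ ∧ ∀ k, BadStep ι 𝔠 (f k) (f (k + 1)) := by
    rintro ⟨f, hf0, hstep⟩
    have horient : ∀ k, IsOrient (f k) := by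
      intro k; induction k with
      | zero => rw [hf0]; exact hσ
      | succ k ih => exact orient_step _ _ ih (hstep k)
    choose Cs hCs hCsnot hCeq using hstep
    have hrec : ∀ k e, f (k + 1) e = f k e - 2 * Cs k e := by
      intro k e
      rw [hCeq k e]
      rcases Classical.em (Cs k e = 0) with h | h
      · simp [h]
      · have h2 := (hCs k).2 e h
        simp only [h, if_pos, ne_eq, not_false_iff]
        rw [← h2]; ring
    have htel : ∀ i j, i ≤ j → ∀ e, f j e = f i e - 2 * ∑ k ∈ Finset.Ico i j, Cs k e := by
      intro i j hij
      induction j, hij using Nat.le_induction with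
      | base => intro e; simp
      | succ j hij ih =>
        intro e
        rw [hrec j e, ih e, Finset.sum_Ico_succ_top hij]
        ring
    -- pigeonhole
    have : ∃ i j : ℕ, i ≠ j ∧ (fun k => (fun e => decide (f k e = 1))) i =
        (fun k => (fun e => decide (f k e = 1))) j :=
      Finite.exists_ne_map_eq_of_infinite _
    obtain ⟨i, j, hij, heq⟩ := this
    have key : ∀ i j : ℕ, i < j →
        ((fun e => decide (f i e = 1)) = fun e => decide (f j e = 1)) → False := by
      intro i j hlt heq
      have hfeq : f i = f j := by
        funext e
        have he := congrFun heq e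
        rcases horient i e with h1 | h1 <;> rcases horient j e with h2 | h2 <;>
          simp [h1, h2] at he ⊢
      have hsum : ∀ e, ∑ k ∈ Finset.Ico i j, Cs k e = 0 := by
        intro e
        have := htel i j (le_of_lt hlt) e
        rw [← hfeq] at this
        omega
      -- apply acyclicity
      set Cs' : Fin (j - i) → E → ℤ := fun t => fun e => -Cs (i + t.val) e with hCs'
      have hmem : ∀ t, Cs' t ∈ 𝔠 := by
        intro t
        by_contra hnot
        exact hCsnot (i + t.val) ((hcfg.2 _ (hCs (i + t.val)).1).mpr hnot)
      have hzero : ∀ e, ∑ t : Fin (j - i), ((fun _ => (1 : ℕ)) t : ℤ) * Cs' t e = 0 := by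
        intro e
        have := hsum e
        rw [Finset.sum_Ico_eq_sum_range] at this
        simp only [hCs', Nat.cast_one, one_mul]
        rw [Fin.sum_univ_eq_sum_range (fun t => -Cs (i + t) e)]
        rw [Finset.sum_neg_distrib, this, neg_zero]
      have := hacyc (j - i) Cs' (fun _ => 1) hmem hzero ⟨0, by omega⟩
      exact one_ne_zero this
    rcases lt_or_gt_of_ne hij with h | h
    · exact key i j h heq
    · exact key j i h heq.symm
  refine ⟨part1, ?_⟩
  by_contra h
  push_neg at h
  have next : ∀ τ : E → ℤ, Relation.ReflTransGen (RevStep ι) σ τ →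
      ∃ τ', BadStep ι 𝔠 τ τ' ∧ Relation.ReflTransGen (RevStep ι) σ τ' := by
    intro τ hτ
    have hnf := h τ hτ
    unfold Faithful at hnf
    push_neg at hnf
    obtain ⟨C, hC, hCn⟩ := hnf
    refine ⟨fun e => if C e ≠ 0 then -τ e else τ e, ⟨C, hC, hCn, fun e => rfl⟩, ?_⟩
    exact hτ.tail ⟨C, hC, fun e => rfl⟩
  let g : ℕ → {τ : E → ℤ // Relation.ReflTransGen (RevStep ι) σ τ} := fun n =>
    Nat.rec ⟨σ, Relation.ReflTransGen.refl⟩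
      (fun _ p => ⟨(next p.1 p.2).choose, (next p.1 p.2).choose_spec.2⟩) n
  exact part1 ⟨fun k => (g k).1, rfl, fun k => (next (g k).1 (g k).2).choose_spec.1⟩
end

section
/- Torsor translation for edge ordering maps: let β, β' be edge ordering maps on a finite connected graph G with data e_1 < e_2 < ... < e_h and ē_1 < e_2 < ... < e_h respectively, where ē_1 is e_1 with reversed orientation and e_1 = (v,u). Then for every spanning tree T, the divisors satisfy β(T) − β'(T) ≡ (u) − (v) in Pic^0(G); explicitly, if e_1 ∉ T the difference is exactly (u) − (v), and if e_1 ∈ T the difference is (u) − (v) − Δχ_{U'}, where [V', U'] is the fundamental cut of e_1 in T with v ∈ V', u ∈ U', Δ is the graph Laplacian, and χ_{U'} the indicator vector of U'. -/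
open scoped Classical

variable {V E : Type} [Fintype V] [Fintype E] [DecidableEq V] [DecidableEq E]

/-- The graph Laplacian applied to an integer vector `x : V → ℤ`. -/
def lap (ι : E → V × V) (x : V → ℤ) (w : V) : ℤ :=
  ∑ e : E, ((if (ι e).1 = w then x (ι e).1 - x (ι e).2 else 0) +
            (if (ι e).2 = w then x (ι e).2 - x (ι e).1 else 0))

/-!
Pairing a vector with zero boundary against the gradient of a potential gives zero. Take as
potential the indicator χ of the side `U'` of the fundamental cut of a tree edge `t`: it is
constant along `T - t`, and it jumps by one along `t`, because a path from the head of `t` to its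
tail in `T - t` would close up with `t` to a cycle inside `T`. So every fundamental cycle `C` of a
non-tree edge `f` satisfies `C t = -C f (χ (head f) - χ (tail f))`. Hence the fundamental cycle of
`f` is determined up to sign; the two orderings orient it alike unless it passes through `e₁`;
and it does so exactly when `f` crosses the cut, in which case `f` carries its chip across the
cut. These moves add up to `(u) - (v) - Δχ`, and when `e₁ ∉ T` only `f = e₁` itself moves.
-/

open Finset

section

omit [Fintype V] [Fintype E] [DecidableEq V] [DecidableEq E]

section Basic

variable {ι : E → V × V}

theorem ReachIn.symm {A : Set E} {a b : V} (h : ReachIn ι A a b) : ReachIn ι A b a := by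
  induction h with
  | refl => exact .refl
  | tail _ hstep ih =>
    obtain ⟨e, he, hor⟩ := hstep
    exact .head ⟨e, he, hor.symm⟩ ih

def incidence (ι : E → V × V) (e : E) (w : V) : ℤ :=
  (if (ι e).2 = w then 1 else 0) - (if (ι e).1 = w then 1 else 0)

def grad (ι : E → V × V) (x : V → ℤ) (e : E) : ℤ := x (ι e).2 - x (ι e).1

theorem incidence_of_loop [DecidableEq V] {e : E} (he : (ι e).1 = (ι e).2) (w : V) :
    incidence ι e w = 0 := by
  simp [incidence, he]

theorem grad_of_loop {e : E} (he : (ι e).1 = (ι e).2) (x : V → ℤ) : grad ι x e = 0 := by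
  simp [grad, he]

theorem grad_eq_sum_mul_incidence [Fintype V] [DecidableEq V] (x : V → ℤ) (e : E) :
    grad ι x e = ∑ w, x w * incidence ι e w := by
  simp [grad, incidence, mul_sub, sum_sub_distrib]

theorem lap_eq_sum_grad_mul_incidence [Fintype E] [DecidableEq V] (x : V → ℤ) (w : V) :
    lap ι x w = ∑ e, grad ι x e * incidence ι e w := by
  refine sum_congr rfl fun e _ => ?_
  simp only [grad, incidence]
  split_ifs <;> ring

theorem sum_mul_grad_eq_zero [Fintype V] [Fintype E] [DecidableEq V] {C : E → ℤ}
    (hC : ∀ w, ∑ e, C e * incidence ι e w = 0) (x : V → ℤ) : ∑ e, C e * grad ι x e = 0 := by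
  simp_rw [grad_eq_sum_mul_incidence, mul_sum]
  rw [sum_comm]
  simp_rw [mul_left_comm (C _), ← mul_sum, hC, mul_zero, sum_const_zero]

theorem mul_grad_add_mul_grad_eq_zero [Fintype V] [Fintype E] [DecidableEq V] {C : E → ℤ}
    (hC : ∀ w, ∑ e, C e * incidence ι e w = 0) {x : V → ℤ} {t f : E} (htf : t ≠ f)
    (hx : ∀ e, C e ≠ 0 → e ≠ t → e ≠ f → grad ι x e = 0) :
    C t * grad ι x t + C f * grad ι x f = 0 := by
  rw [← sum_mul_grad_eq_zero hC x, sum_eq_add_of_mem t f (mem_univ _) (mem_univ _) htf]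
  rintro e - ⟨het, hef⟩
  by_cases he : C e = 0
  · rw [he, zero_mul]
  · rw [hx e he het hef, mul_zero]

def headChip (ι : E → V × V) (f : E) (σ : ℤ) (w : V) : ℤ :=
  if σ = 1 then (if (ι f).2 = w then 1 else 0) else (if (ι f).1 = w then 1 else 0)

theorem headChip_of_loop [DecidableEq V] {f : E} (hf : (ι f).1 = (ι f).2) (σ σ' : ℤ) (w : V) :
    headChip ι f σ w = headChip ι f σ' w := by
  simp [headChip, hf]

theorem headChip_sub_headChip_neg [DecidableEq V] {σ : ℤ} (hσ : σ = 1 ∨ σ = -1) (f : E)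
    (w : V) : headChip ι f σ w - headChip ι f (-σ) w = σ * incidence ι f w := by
  rcases hσ with rfl | rfl <;> simp [headChip, incidence]

end Basic

section ComponentIndicator

variable {ι : E → V × V} {A : Set E} {r : V}

noncomputable def componentIndicator (ι : E → V × V) (A : Set E) (r z : V) : ℤ :=
  if ReachIn ι A r z then 1 else 0

theorem grad_componentIndicator_of_mem {e : E} (he : e ∈ A) :
    grad ι (componentIndicator ι A r) e = 0 := by
  have hiff : ReachIn ι A r (ι e).1 ↔ ReachIn ι A r (ι e).2 :=
    ⟨fun h => h.tail ⟨e, he, .inl rfl⟩, fun h => h.tail ⟨e, he, .inr rfl⟩⟩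
  simp [grad, componentIndicator, hiff]

theorem grad_componentIndicator_mem (e : E) :
    grad ι (componentIndicator ι A r) e = 0 ∨ grad ι (componentIndicator ι A r) e = 1 ∨
      grad ι (componentIndicator ι A r) e = -1 := by
  unfold grad componentIndicator
  split_ifs <;> simp

end ComponentIndicator

section Walk

variable {ι : E → V × V} {m : ℕ} {p : ℕ → V} {g : ℕ → E}

theorem ReachIn.exists_path [DecidableEq V] {A : Set E} {a b : V} (h : ReachIn ι A a b) :
    ∃ (n : ℕ) (p : ℕ → V), p 0 = a ∧ p n = b ∧
      (∀ i < n, ∃ e ∈ A, ι e = (p i, p (i + 1)) ∨ ι e = (p (i + 1), p i)) ∧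
      ∀ i ≤ n, ∀ j ≤ n, p i = p j → i = j := by
  let G := SimpleGraph.fromRel fun x y => ∃ e ∈ A, ι e = (x, y) ∨ ι e = (y, x)
  have hreach : G.Reachable a b := by
    induction h with
    | refl => rfl
    | @tail x y _ hxy ih =>
      by_cases hne : x = y
      · exact hne ▸ ih
      · exact ih.trans ((SimpleGraph.fromRel_adj _ _ _).2 ⟨hne, .inl hxy⟩).reachable
  obtain ⟨W⟩ := hreach
  obtain ⟨P, hP⟩ := W.toPath
  refine ⟨P.length, P.getVert, P.getVert_zero, P.getVert_length, fun i hi => ?_,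
    fun i hi j hj => hP.getVert_injOn hi hj⟩
  obtain ⟨-, hxy | ⟨e, he, hor⟩⟩ := (SimpleGraph.fromRel_adj _ _ _).1 (P.adj_getVert_succ hi)
  exacts [hxy, ⟨e, he, hor.symm⟩]

theorem edges_inj_of_vertices_inj {n : ℕ}
    (hstep : ∀ i < n, ι (g i) = (p i, p (i + 1)) ∨ ι (g i) = (p (i + 1), p i))
    (hp : ∀ i ≤ n, ∀ j ≤ n, p i = p j → i = j) :
    ∀ i < n, ∀ j < n, g i = g j → i = j := by
  intro i hi j hj hij
  rcases hstep i hi with h1 | h1 <;> rcases hstep j hj with h2 | h2 <;>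
    rw [hij, h2, Prod.mk.injEq] at h1
  · exact (hp j (by omega) i (by omega) h1.1).symm
  · have := hp (j + 1) (by omega) i (by omega) h1.1
    have := hp j (by omega) (i + 1) (by omega) h1.2
    omega
  · have := hp j (by omega) (i + 1) (by omega) h1.1
    have := hp (j + 1) (by omega) i (by omega) h1.2
    omega
  · have := hp (j + 1) (by omega) (i + 1) (by omega) h1.1
    omega

def stepSign (ι : E → V × V) (p : ℕ → V) (g : ℕ → E) (i : ℕ) : ℤ :=
  if ι (g i) = (p i, p (i + 1)) then 1 else -1

/-- The signed edge vector of the closed walk `p 0, g 0, p 1, …, g (m - 1), p m = p 0`. -/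
def walkVec (ι : E → V × V) (m : ℕ) (p : ℕ → V) (g : ℕ → E) (e : E) : ℤ :=
  ∑ i ∈ range m, if g i = e then stepSign ι p g i else 0

theorem stepSign_eq_one_or [DecidableEq V] (i : ℕ) :
    stepSign ι p g i = 1 ∨ stepSign ι p g i = -1 := by
  unfold stepSign
  split_ifs <;> simp

theorem stepSign_ne_zero [DecidableEq V] (i : ℕ) : stepSign ι p g i ≠ 0 := by
  rcases stepSign_eq_one_or (ι := ι) (p := p) (g := g) i with h | h <;> simp [h]

theorem stepSign_mul_incidence [DecidableEq V] {i : ℕ}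
    (hstep : ι (g i) = (p i, p (i + 1)) ∨ ι (g i) = (p (i + 1), p i)) (w : V) :
    stepSign ι p g i * incidence ι (g i) w =
      (if p (i + 1) = w then 1 else 0) - (if p i = w then 1 else 0) := by
  by_cases h : ι (g i) = (p i, p (i + 1))
  · simp [stepSign, incidence, h]
  · rw [stepSign, if_neg h, incidence, hstep.resolve_left h]
    ring

theorem walkVec_apply [DecidableEq V] [DecidableEq E]
    (hg : ∀ i < m, ∀ j < m, g i = g j → i = j) {k : ℕ} (hk : k < m) :
    walkVec ι m p g (g k) = stepSign ι p g k := by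
  rw [walkVec, sum_eq_single_of_mem k (mem_range.2 hk) fun j hj hjk =>
    if_neg fun h => hjk (hg j (mem_range.1 hj) k hk h), if_pos rfl]

theorem exists_of_walkVec_ne_zero [DecidableEq V] [DecidableEq E] {e : E}
    (he : walkVec ι m p g e ≠ 0) : ∃ i < m, g i = e := by
  by_contra! H
  exact he (sum_eq_zero fun i hi => if_neg (H i (mem_range.1 hi)))

theorem incident_iff_of_step {i : ℕ} {w : V}
    (hstep : ι (g i) = (p i, p (i + 1)) ∨ ι (g i) = (p (i + 1), p i)) :
    ((ι (g i)).1 = w ∨ (ι (g i)).2 = w) ↔ (p i = w ∨ p (i + 1) = w) := by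
  rcases hstep with h | h <;> simp [h, or_comm]

section Closed

variable (hstep : ∀ i < m, ι (g i) = (p i, p (i + 1)) ∨ ι (g i) = (p (i + 1), p i))
  (hclose : p m = p 0)
include hstep hclose

theorem sum_walkVec_mul_incidence [Fintype E] [DecidableEq V] [DecidableEq E] (w : V) :
    ∑ e, walkVec ι m p g e * incidence ι e w = 0 := by
  simp only [walkVec, sum_mul, ite_mul, zero_mul]
  rw [sum_comm]
  simp only [sum_ite_eq, mem_univ, if_true]
  rw [sum_congr rfl fun i hi => stepSign_mul_incidence (hstep i (mem_range.1 hi)) w,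
    sum_range_sub (fun i => if p i = w then (1 : ℤ) else 0), hclose, sub_self]

theorem exists_vertex_eq_of_incident {w : V} {i : ℕ} (hi : i < m)
    (hw : (ι (g i)).1 = w ∨ (ι (g i)).2 = w) : ∃ k < m, p k = w := by
  rcases (incident_iff_of_step (hstep i hi)).1 hw with h | h
  · exact ⟨i, hi, h⟩
  · rcases Nat.lt_or_ge (i + 1) m with hlt | hge
    · exact ⟨i + 1, hlt, h⟩
    · exact ⟨0, by omega, by rwa [← hclose, show m = i + 1 by omega]⟩

variable (hp : ∀ i < m, ∀ j < m, p i = p j → i = j) (hg : ∀ i < m, ∀ j < m, g i = g j → i = j)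
include hp hg

theorem card_incident_walkVec [Fintype E] [DecidableEq V] [DecidableEq E] (hm : 2 ≤ m)
    (w : V) :
    (univ.filter fun e => walkVec ι m p g e ≠ 0 ∧ ((ι e).1 = w ∨ (ι e).2 = w)).card = 0 ∨
    (univ.filter fun e => walkVec ι m p g e ≠ 0 ∧ ((ι e).1 = w ∨ (ι e).2 = w)).card = 2 := by
  have himage : (univ.filter fun e => walkVec ι m p g e ≠ 0 ∧ ((ι e).1 = w ∨ (ι e).2 = w)) =
      ((range m).filter fun i => p i = w ∨ p (i + 1) = w).image g := by
    ext e
    simp only [mem_filter, mem_univ, true_and, mem_image, mem_range]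
    constructor
    · rintro ⟨he, hw⟩
      obtain ⟨i, hi, rfl⟩ := exists_of_walkVec_ne_zero he
      exact ⟨i, ⟨hi, (incident_iff_of_step (hstep i hi)).1 hw⟩, rfl⟩
    · rintro ⟨i, ⟨hi, hw⟩, rfl⟩
      rw [walkVec_apply hg hi]
      exact ⟨stepSign_ne_zero i, (incident_iff_of_step (hstep i hi)).2 hw⟩
  rw [himage, card_image_of_injOn fun i hi j hj => hg i (mem_range.1 (mem_filter.1 hi).1) j
    (mem_range.1 (mem_filter.1 hj).1)]
  by_cases hw : ∃ k < m, p k = w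
  · obtain ⟨k, hk, rfl⟩ := hw
    right
    -- the two steps at `p k` are step `k` and, cyclically, the step before it
    refine card_eq_two.2 ⟨k, if k = 0 then m - 1 else k - 1, by split_ifs <;> omega, ?_⟩
    ext i
    simp only [mem_filter, mem_range, mem_insert, mem_singleton]
    constructor
    · rintro ⟨hi, h | h⟩
      · exact .inl (hp i hi k hk h)
      · right
        rcases Nat.lt_or_ge (i + 1) m with hlt | hge
        · have := hp _ hlt k hk h
          split_ifs <;> omega
        · rw [show i + 1 = m by omega, hclose] at h
          have := hp 0 (by omega) k hk h
          split_ifs <;> omega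
    · rintro (rfl | rfl)
      · exact ⟨hk, .inl rfl⟩
      · split_ifs with h0
        · exact ⟨by omega, .inr (by rw [Nat.sub_add_cancel (by omega), hclose, h0])⟩
        · exact ⟨by omega, .inr (by rw [Nat.sub_add_cancel (by omega)])⟩
  · left
    refine card_eq_zero.2 (filter_eq_empty_iff.2 fun i hi hw' => hw ?_)
    exact exists_vertex_eq_of_incident hstep hclose (mem_range.1 hi)
      ((incident_iff_of_step (hstep i (mem_range.1 hi))).2 hw')

theorem isCycleVec_walkVec [Fintype E] [DecidableEq V] [DecidableEq E] (hm : 2 ≤ m) :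
    IsCycleVec ι (walkVec ι m p g) := by
  have hreach : ∀ k ≤ m, ReachIn ι {e | walkVec ι m p g e ≠ 0} (p 0) (p k) := by
    intro k hk
    induction k with
    | zero => exact .refl
    | succ k ih =>
      refine (ih (by omega)).tail ⟨g k, ?_, hstep k (by omega)⟩
      show walkVec ι m p g (g k) ≠ 0
      rw [walkVec_apply hg (by omega : k < m)]
      exact stepSign_ne_zero k
  have htouch : ∀ x, (∃ e, walkVec ι m p g e ≠ 0 ∧ ((ι e).1 = x ∨ (ι e).2 = x)) →
      ReachIn ι {e | walkVec ι m p g e ≠ 0} (p 0) x := by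
    rintro x ⟨e, he, hx⟩
    obtain ⟨i, hi, rfl⟩ := exists_of_walkVec_ne_zero he
    obtain ⟨k, hk, rfl⟩ := exists_vertex_eq_of_incident hstep hclose hi hx
    exact hreach k hk.le
  refine ⟨fun e => ?_, ⟨g 0, ?_⟩, sum_walkVec_mul_incidence hstep hclose,
    card_incident_walkVec hstep hclose hp hg hm,
    fun a b ha hb => (htouch a ha).symm.trans (htouch b hb)⟩
  · by_cases he : walkVec ι m p g e = 0
    · exact .inl he
    · obtain ⟨i, hi, rfl⟩ := exists_of_walkVec_ne_zero he
      rw [walkVec_apply hg hi]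
      exact .inr (stepSign_eq_one_or i)
  · rw [walkVec_apply hg (by omega)]
    exact stepSign_ne_zero 0

end Closed

end Walk

section Forest

variable {ι : E → V × V} {T : Finset E}

def IsForest (ι : E → V × V) (T : Finset E) : Prop :=
  ∀ C : E → ℤ, IsCycleVec ι C → ∃ e, C e ≠ 0 ∧ e ∉ T

theorem IsForest.not_reachIn [Fintype E] [DecidableEq V] [DecidableEq E] (hT : IsForest ι T)
    {t : E} (ht : t ∈ T) (hnl : (ι t).1 ≠ (ι t).2) :
    ¬ ReachIn ι {e | e ∈ T ∧ e ≠ t} (ι t).2 (ι t).1 := by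
  intro hr
  obtain ⟨n, p, hp0, hpn, hadj, hp⟩ := hr.exists_path
  have : Nonempty E := ⟨t⟩
  choose! g hgA hgι using hadj
  have hn : n ≠ 0 := by
    rintro rfl
    exact hnl (hpn.symm.trans hp0)
  -- close the path up by `t`, which runs from `p n` back to `p 0`
  let q : ℕ → V := fun i => if i ≤ n then p i else p 0
  let g' : ℕ → E := fun i => if i < n then g i else t
  have hstep : ∀ i < n + 1, ι (g' i) = (q i, q (i + 1)) ∨ ι (g' i) = (q (i + 1), q i) := by
    intro i hi
    rcases Nat.lt_or_ge i n with h | h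
    · simpa [g', q, h, h.le, Nat.succ_le_of_lt h] using hgι i h
    · obtain rfl : i = n := by omega
      simp [g', q, hpn, hp0]
  have hq : ∀ i < n + 1, ∀ j < n + 1, q i = q j → i = j := fun i hi j hj h =>
    hp i (by omega) j (by omega) (by simpa [q, show i ≤ n by omega, show j ≤ n by omega] using h)
  have hg' : ∀ i < n + 1, ∀ j < n + 1, g' i = g' j → i = j := by
    intro i hi j hj h
    simp only [g'] at h
    split_ifs at h with hi' hj' hj'
    · exact edges_inj_of_vertices_inj hgι hp i hi' j hj' h
    · exact absurd h (hgA i hi').2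
    · exact absurd h.symm (hgA j hj').2
    · omega
  obtain ⟨e, he, heT⟩ := hT _ (isCycleVec_walkVec hstep (by simp [q]) hq hg' (by omega))
  obtain ⟨i, hi, rfl⟩ := exists_of_walkVec_ne_zero he
  apply heT
  simp only [g']
  split_ifs with h
  exacts [(hgA i h).1, ht]

theorem isCycleVec_pair_loops [Fintype E] [DecidableEq V] [DecidableEq E] {l e : E} {a : V}
    (hle : l ≠ e) (hl : ι l = (a, a)) (he : ι e = (a, a)) :
    IsCycleVec ι fun x => if x = l ∨ x = e then 1 else 0 := by
  have hsupp : ∀ x, (if x = l ∨ x = e then (1 : ℤ) else 0) ≠ 0 ↔ x = l ∨ x = e := by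
    intro x
    split_ifs with hx <;> simp [hx]
  have hloop : ∀ x, (if x = l ∨ x = e then (1 : ℤ) else 0) ≠ 0 → ι x = (a, a) := by
    intro x hx
    rcases (hsupp x).1 hx with rfl | rfl <;> assumption
  have hvert : ∀ z, (∃ x, (if x = l ∨ x = e then (1 : ℤ) else 0) ≠ 0 ∧
      ((ι x).1 = z ∨ (ι x).2 = z)) → z = a := by
    rintro z ⟨x, hx, hz⟩
    rw [hloop x hx] at hz
    exact (hz.elim id id).symm
  refine ⟨fun x => ?_, ⟨l, by simp⟩, fun w => sum_eq_zero fun x _ => ?_, fun w => ?_,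
    fun x y hx hy => ?_⟩ <;> beta_reduce
  · split_ifs <;> simp
  · by_cases hx : (if x = l ∨ x = e then (1 : ℤ) else 0) = 0
    · rw [hx, zero_mul]
    · simp [hloop x hx]
  · by_cases hw : a = w
    · right
      refine card_eq_two.2 ⟨l, e, hle, ?_⟩
      ext x
      simp only [mem_filter, mem_univ, true_and, mem_insert, mem_singleton, hsupp]
      exact ⟨And.left, fun hx => ⟨hx, by simp [hloop x ((hsupp x).2 hx), hw]⟩⟩
    · left
      refine card_eq_zero.2 (filter_eq_empty_iff.2 fun x _ ⟨hx, hxw⟩ => hw ?_)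
      exact (hvert w ⟨x, hx, hxw⟩).symm
  · rw [hvert x hx, hvert y hy]
    exact .refl

theorem IsForest.eq_of_loops [Fintype E] [DecidableEq V] [DecidableEq E] (hT : IsForest ι T)
    {l e : E} {a : V} (hlT : l ∈ T) (heT : e ∈ T) (hl : ι l = (a, a)) (he : ι e = (a, a)) :
    l = e := by
  by_contra hle
  obtain ⟨x, hx, hxT⟩ := hT _ (isCycleVec_pair_loops hle hl he)
  have hxle : x = l ∨ x = e := by
    by_contra h
    exact hx (if_neg h)
  rcases hxle with rfl | rfl <;> contradiction

end Forest

section FundCycle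

variable {ι : E → V × V} {T : Finset E} {f t : E} {C C' : E → ℤ}

/-- The indicator `χ_{U'}` of the side of the fundamental cut of `t` that contains its head. -/
noncomputable def cutIndicator (ι : E → V × V) (T : Finset E) (t : E) : V → ℤ :=
  componentIndicator ι {e | e ∈ T ∧ e ≠ t} (ι t).2

theorem grad_cutIndicator_self [Fintype E] [DecidableEq V] [DecidableEq E] (hT : IsForest ι T)
    (ht : t ∈ T) (hnl : (ι t).1 ≠ (ι t).2) : grad ι (cutIndicator ι T t) t = 1 := by
  rw [grad, cutIndicator, componentIndicator, componentIndicator,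
    if_pos (show ReachIn ι {e | e ∈ T ∧ e ≠ t} (ι t).2 (ι t).2 from .refl),
    if_neg (hT.not_reachIn ht hnl), sub_zero]

theorem grad_cutIndicator_of_mem {e : E} (he : e ∈ T) (het : e ≠ t) :
    grad ι (cutIndicator ι T t) e = 0 :=
  grad_componentIndicator_of_mem ⟨he, het⟩

theorem grad_cutIndicator_mem (e : E) :
    grad ι (cutIndicator ι T t) e = 0 ∨ grad ι (cutIndicator ι T t) e = 1 ∨
      grad ι (cutIndicator ι T t) e = -1 :=
  grad_componentIndicator_mem e

def IsFundCycle (ι : E → V × V) (T : Finset E) (f : E) (C : E → ℤ) : Prop :=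
  IsCycleVec ι C ∧ (∀ e, C e ≠ 0 → e ∈ T ∨ e = f) ∧ C f ≠ 0

theorem IsFundCycle.apply_self_eq_one_or [Fintype E] [DecidableEq V]
    (hC : IsFundCycle ι T f C) : C f = 1 ∨ C f = -1 :=
  (hC.1.1 f).resolve_left hC.2.2

/-- A single loop is not a cycle (cycle vectors have degree `0` or `2` everywhere), so a forest
may contain loops. -/
theorem IsFundCycle.apply_eq_zero_of_loop [Fintype E] [DecidableEq V] [DecidableEq E]
    (hT : IsForest ι T) (hC : IsFundCycle ι T f C) (hf : (ι f).1 ≠ (ι f).2) {l : E}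
    (hl : (ι l).1 = (ι l).2) : C l = 0 := by
  by_contra hCl
  obtain ⟨⟨-, -, hb, hdeg, -⟩, hsupp, -⟩ := hC
  set a := (ι l).1
  set S := univ.filter fun e => C e ≠ 0 ∧ ((ι e).1 = a ∨ (ι e).2 = a)
  have hlS : l ∈ S := by simp [S, hCl, a]
  obtain ⟨e, hel, hS⟩ : ∃ e, e ≠ l ∧ S = {l, e} := by
    obtain ⟨x, y, hxy, hS⟩ := card_eq_two.1 ((hdeg a).resolve_left (card_ne_zero_of_mem hlS))
    change S = {x, y} at hS
    rw [hS, mem_insert, mem_singleton] at hlS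
    rcases hlS with rfl | rfl
    exacts [⟨y, hxy.symm, hS⟩, ⟨x, hxy, hS.trans (pair_comm _ _)⟩]
  obtain ⟨hCe, hea⟩ := (mem_filter.1 (hS ▸ mem_insert_of_mem (mem_singleton_self e) : e ∈ S)).2
  -- only `l` and `e` meet the cycle at `a`, and the loop `l` adds nothing to the boundary there
  have hinc : incidence ι e a = 0 := by
    have h : ∑ x, C x * incidence ι x a = 0 := hb a
    rw [← sum_subset (subset_univ S) fun x _ hx => ?_, hS, sum_pair hel.symm,
      incidence_of_loop hl, mul_zero, zero_add] at h
    · exact (mul_eq_zero.1 h).resolve_left hCe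
    · by_cases hCx : C x = 0
      · rw [hCx, zero_mul]
      · obtain ⟨h1, h2⟩ := not_or.1 fun h => hx (mem_filter.2 ⟨mem_univ _, hCx, h⟩)
        simp [incidence, h1, h2]
  have he : ι e = (a, a) := by
    unfold incidence at hinc
    rcases hea with h | h
    · refine Prod.ext h (by_contra fun h' => ?_)
      simp [h, h'] at hinc
    · refine Prod.ext (by_contra fun h' => ?_) h
      simp [h, h'] at hinc
  have hmemT : ∀ x, C x ≠ 0 → (ι x).1 = (ι x).2 → x ∈ T := fun x hx hxl =>
    (hsupp x hx).resolve_right (by rintro rfl; exact hf hxl)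
  exact hel (hT.eq_of_loops (hmemT e hCe (by rw [he])) (hmemT l hCl hl) he (Prod.ext rfl hl.symm))

theorem IsFundCycle.mul_grad_cutIndicator_add_eq_zero [Fintype V] [Fintype E]
    [DecidableEq V] (hC : IsFundCycle ι T f C) (ht : t ∈ T) (hf : f ∉ T) :
    C t * grad ι (cutIndicator ι T t) t + C f * grad ι (cutIndicator ι T t) f = 0 :=
  mul_grad_add_mul_grad_eq_zero hC.1.2.2.1 (by rintro rfl; exact hf ht) fun e he het hef =>
    grad_cutIndicator_of_mem ((hC.2.1 e he).resolve_right hef) het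

theorem IsFundCycle.apply_of_mem [Fintype V] [Fintype E] [DecidableEq V] [DecidableEq E]
    (hT : IsForest ι T) (hC : IsFundCycle ι T f C) (hf : f ∉ T) (ht : t ∈ T)
    (hnl : (ι t).1 ≠ (ι t).2) : C t = -(C f * grad ι (cutIndicator ι T t) f) := by
  have h := hC.mul_grad_cutIndicator_add_eq_zero ht hf
  rw [grad_cutIndicator_self hT ht hnl, mul_one] at h
  linarith

theorem IsFundCycle.eq_mul [Fintype V] [Fintype E] [DecidableEq V] [DecidableEq E]
    (hT : IsForest ι T) (hf : f ∉ T) (hnl : (ι f).1 ≠ (ι f).2) (hC : IsFundCycle ι T f C)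
    (hC' : IsFundCycle ι T f C') (e : E) : C' e = C f * C' f * C e := by
  have hsq : C f * C f = 1 := by rcases hC.apply_self_eq_one_or with h | h <;> simp [h]
  by_cases hef : e = f
  · subst hef
    linear_combination -C' e * hsq
  by_cases heT : e ∈ T
  · by_cases hel : (ι e).1 = (ι e).2
    · rw [hC.apply_eq_zero_of_loop hT hnl hel, hC'.apply_eq_zero_of_loop hT hnl hel, mul_zero]
    · rw [hC.apply_of_mem hT hf heT hel, hC'.apply_of_mem hT hf heT hel]
      linear_combination C' f * grad ι (cutIndicator ι T e) f * hsq
  · have h0 : ∀ D : E → ℤ, IsFundCycle ι T f D → D e = 0 := fun D hD => by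
      by_contra h
      rcases hD.2.1 e h with h | h <;> contradiction
    rw [h0 C hC, h0 C' hC', mul_zero]

end FundCycle

section Orientation

variable {h : ℕ} {ord : Fin h → E} {s s' : Fin h → ℤ} {C : E → ℤ}

def IsOrientedBy (ord : Fin h → E) (s : Fin h → ℤ) (C : E → ℤ) : Prop :=
  ∀ i, C (ord i) ≠ 0 → (∀ j < i, C (ord j) = 0) → C (ord i) = s i

theorem IsOrientedBy.apply_first {e : E} (hC : IsOrientedBy ord s C) {hpos : 0 < h}
    (he : e = ord ⟨0, hpos⟩) (h0 : C e ≠ 0) : C e = s ⟨0, hpos⟩ := by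
  subst he
  exact hC _ h0 fun _ hj => absurd hj (Nat.not_lt_zero _)

theorem IsOrientedBy.eq_one_of_mul {c : ℤ} (hC : IsOrientedBy ord s C)
    (hC' : IsOrientedBy ord s' fun e => c * C e) (hc : c ≠ 0) (hex : ∃ i, C (ord i) ≠ 0)
    (hs : ∀ i, C (ord i) ≠ 0 → s' i = s i) : c = 1 := by
  obtain ⟨i, hi, hmin⟩ := wellFounded_lt.has_min {i | C (ord i) ≠ 0} hex
  have hbefore : ∀ j < i, C (ord j) = 0 := fun j hj => not_not.1 fun h => hmin j h hj
  have hsi := hC i hi hbefore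
  have hcsi : c * C (ord i) = s' i :=
    hC' i (mul_ne_zero hc hi) fun j hj => by simp [hbefore j hj]
  rw [hsi, hs i hi] at hcsi
  exact (mul_eq_right₀ (hsi ▸ hi)).1 hcsi

end Orientation

section BreakDivisor

variable {ι : E → V × V} {T : Finset E} {f t : E} {C C' : E → ℤ}

theorem IsFundCycle.headChip_eq_of_isOrientedBy [Fintype V] [Fintype E] [DecidableEq V]
    [DecidableEq E] {h : ℕ} {ord : Fin h → E} {s s' : Fin h → ℤ} (hT : IsForest ι T)
    (hf : f ∉ T) (hC : IsFundCycle ι T f C) (hC' : IsFundCycle ι T f C')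
    (hoC : IsOrientedBy ord s C) (hoC' : IsOrientedBy ord s' C')
    (hex : ∃ e, C e ≠ 0 ∧ e ∈ Set.range ord) (hs : ∀ i, C (ord i) ≠ 0 → s' i = s i) (w : V) :
    headChip ι f (C' f) w = headChip ι f (C f) w := by
  by_cases hnl : (ι f).1 = (ι f).2
  · exact headChip_of_loop hnl _ _ w
  obtain ⟨_, he, i, rfl⟩ := hex
  have hC'eq : C' = fun e => C f * C' f * C e := funext (hC.eq_mul hT hf hnl hC')
  have hc : C f * C' f = 1 :=
    hoC.eq_one_of_mul (hC'eq ▸ hoC') (mul_ne_zero hC.2.2 hC'.2.2) ⟨i, he⟩ hs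
  have hC'f : C' f = C f := by
    rcases hC.apply_self_eq_one_or with h | h <;> rw [h] at hc ⊢ <;> linarith
  rw [hC'f]

theorem IsFundCycle.headChip_sub_headChip [Fintype V] [Fintype E] [DecidableEq V]
    [DecidableEq E] (hT : IsForest ι T) (ht : t ∈ T) (hf : f ∉ T) (hC : IsFundCycle ι T f C)
    (hC' : IsFundCycle ι T f C')
    (hsign : C t = 0 → ∀ w, headChip ι f (C' f) w = headChip ι f (C f) w)
    (hlead : C t ≠ 0 → C t = 1) (hlead' : C' t ≠ 0 → C' t = -1) (w : V) :
    headChip ι f (C f) w - headChip ι f (C' f) w =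
      -(grad ι (cutIndicator ι T t) f * incidence ι f w) := by
  by_cases hfl : (ι f).1 = (ι f).2
  · rw [headChip_of_loop hfl (C f) (C' f), incidence_of_loop hfl]
    ring
  have hpair := hC.mul_grad_cutIndicator_add_eq_zero ht hf
  have hpair' := hC'.mul_grad_cutIndicator_add_eq_zero ht hf
  have hδ := grad_cutIndicator_mem (ι := ι) (T := T) (t := t) f
  generalize grad ι (cutIndicator ι T t) f = δ at hpair hpair' hδ ⊢
  rcases hδ with hδ | hδ
  · have hCt : C t = 0 := by
      by_cases htl : (ι t).1 = (ι t).2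
      · exact hC.apply_eq_zero_of_loop hT hfl htl
      · simpa [grad_cutIndicator_self hT ht htl, hδ] using hpair
    rw [hsign hCt w, hδ]
    ring
  have hδsq : δ * δ = 1 := by rcases hδ with rfl | rfl <;> rfl
  have hδ0 : δ ≠ 0 := left_ne_zero_of_mul_eq_one hδsq
  have htl : (ι t).1 ≠ (ι t).2 := fun htl => hC.2.2 <| by
    rw [grad_of_loop htl, mul_zero, zero_add] at hpair
    exact (mul_eq_zero.1 hpair).resolve_right hδ0
  rw [grad_cutIndicator_self hT ht htl, mul_one] at hpair hpair'
  have hCt := hlead <| by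
    rw [eq_neg_of_add_eq_zero_left hpair]
    exact neg_ne_zero.2 (mul_ne_zero hC.2.2 hδ0)
  have hC't := hlead' <| by
    rw [eq_neg_of_add_eq_zero_left hpair']
    exact neg_ne_zero.2 (mul_ne_zero hC'.2.2 hδ0)
  have hCf : C f = -δ := by linear_combination δ * hpair - C f * hδsq - δ * hCt
  have hC'f : C' f = δ := by linear_combination δ * hpair' - C' f * hδsq - δ * hC't
  have hchip := headChip_sub_headChip_neg (ι := ι) (σ := -δ)
    (by rcases hδ with rfl | rfl <;> simp) f w
  rw [neg_neg] at hchip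
  rw [hCf, hC'f, hchip]
  ring

theorem sum_headChip_sub_of_not_mem [Fintype E] [DecidableEq V] [DecidableEq E]
    {D D' : E → E → ℤ} (ht : t ∉ T) (hD : ∀ f ∉ T, IsFundCycle ι T f (D f))
    (hsign : ∀ f ∉ T, D f t = 0 → ∀ w, headChip ι f (D' f f) w = headChip ι f (D f f) w)
    (hDt : D t t = 1) (hD't : D' t t = -1) (w : V) :
    ∑ f ∈ univ.filter (· ∉ T), (headChip ι f (D f f) w - headChip ι f (D' f f) w) =
      incidence ι t w := by
  rw [sum_eq_single_of_mem t (by simpa using ht) fun f hf hft => ?_, hDt, hD't]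
  · simpa using headChip_sub_headChip_neg (ι := ι) (Or.inl rfl) t w
  · have hfT : f ∉ T := (mem_filter.1 hf).2
    have hDft : D f t = 0 :=
      by_contra fun h => ((hD f hfT).2.1 t h).elim ht fun h => hft h.symm
    rw [hsign f hfT hDft, sub_self]

theorem sum_headChip_sub_of_mem [Fintype V] [Fintype E] [DecidableEq V] [DecidableEq E]
    {D D' : E → E → ℤ} (hT : IsForest ι T) (ht : t ∈ T)
    (hD : ∀ f ∉ T, IsFundCycle ι T f (D f)) (hD' : ∀ f ∉ T, IsFundCycle ι T f (D' f))
    (hsign : ∀ f ∉ T, D f t = 0 → ∀ w, headChip ι f (D' f f) w = headChip ι f (D f f) w)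
    (hlead : ∀ f ∉ T, D f t ≠ 0 → D f t = 1) (hlead' : ∀ f ∉ T, D' f t ≠ 0 → D' f t = -1)
    (w : V) :
    ∑ f ∈ univ.filter (· ∉ T), (headChip ι f (D f f) w - headChip ι f (D' f f) w) =
      incidence ι t w - lap ι (cutIndicator ι T t) w := by
  have htree : ∑ e ∈ univ.filter (· ∈ T), grad ι (cutIndicator ι T t) e * incidence ι e w =
      incidence ι t w := by
    rw [sum_eq_single_of_mem t (by simpa using ht) fun e he het => by
      rw [grad_cutIndicator_of_mem (mem_filter.1 he).2 het, zero_mul]]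
    by_cases htl : (ι t).1 = (ι t).2
    · rw [incidence_of_loop htl, mul_zero]
    · rw [grad_cutIndicator_self hT ht htl, one_mul]
  rw [lap_eq_sum_grad_mul_incidence, ← sum_filter_add_sum_filter_not univ (· ∈ T), htree,
    sub_add_cancel_left, ← sum_neg_distrib]
  refine sum_congr rfl fun f hf => ?_
  have hfT : f ∉ T := (mem_filter.1 hf).2
  exact (hD f hfT).headChip_sub_headChip hT ht hfT (hD' f hfT) (hsign f hfT) (hlead f hfT)
    (hlead' f hfT) w

end BreakDivisor

end

theorem edge_ordering_torsor_translation_general (ι : E → V × V) (h : ℕ) (hpos : 0 < h)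
    (F : Finset E)
    (hF : ∀ C : E → ℤ, IsCycleVec ι C → ∃ e, C e ≠ 0 ∧ e ∉ F)
    (ord : Fin h → E)
    (hrange : Set.range ord = {e | e ∉ F})
    (s s' : Fin h → ℤ)
    (hs0 : s ⟨0, hpos⟩ = 1)
    (hs'0 : s' ⟨0, hpos⟩ = -1)
    (hs'i : ∀ i : Fin h, (i : ℕ) ≠ 0 → s' i = s i)
    (e1 : E) (he1 : e1 = ord ⟨0, hpos⟩)
    (v u : V) (hvu : ι e1 = (v, u))
    (T : Finset E)
    (hTacyc : ∀ C : E → ℤ, IsCycleVec ι C → ∃ e, C e ≠ 0 ∧ e ∉ T)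
    (D D' : E → E → ℤ)
    (hD : ∀ f ∉ T, IsCycleVec ι (D f) ∧ (∀ e, D f e ≠ 0 → e ∈ T ∨ e = f) ∧ D f f ≠ 0 ∧
      (∀ i : Fin h, D f (ord i) ≠ 0 → (∀ j : Fin h, j < i → D f (ord j) = 0) →
        D f (ord i) = s i))
    (hD' : ∀ f ∉ T, IsCycleVec ι (D' f) ∧ (∀ e, D' f e ≠ 0 → e ∈ T ∨ e = f) ∧ D' f f ≠ 0 ∧
      (∀ i : Fin h, D' f (ord i) ≠ 0 → (∀ j : Fin h, j < i → D' f (ord j) = 0) →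
        D' f (ord i) = s' i))
    (β β' : V → ℤ)
    (hβ : ∀ w, β w = ∑ f ∈ Finset.univ.filter (· ∉ T),
        if D f f = 1 then (if (ι f).2 = w then 1 else 0) else (if (ι f).1 = w then 1 else 0))
    (hβ' : ∀ w, β' w = ∑ f ∈ Finset.univ.filter (· ∉ T),
        if D' f f = 1 then (if (ι f).2 = w then 1 else 0) else (if (ι f).1 = w then 1 else 0)) :
    (∃ x : V → ℤ, ∀ w, β w - β' w =
        ((if w = u then 1 else 0) - (if w = v then 1 else 0)) - lap ι x w) ∧
    (e1 ∉ T → ∀ w, β w - β' w =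
        (if w = u then 1 else 0) - (if w = v then 1 else 0)) ∧
    (e1 ∈ T → ∀ w, β w - β' w =
        ((if w = u then 1 else 0) - (if w = v then 1 else 0)) -
          lap ι (fun z => if ReachIn ι {g | g ∈ T ∧ g ≠ e1} u z then 1 else 0) w) := by
  have hfund : ∀ f ∉ T, IsFundCycle ι T f (D f) := fun f hf =>
    ⟨(hD f hf).1, (hD f hf).2.1, (hD f hf).2.2.1⟩
  have hfund' : ∀ f ∉ T, IsFundCycle ι T f (D' f) := fun f hf =>
    ⟨(hD' f hf).1, (hD' f hf).2.1, (hD' f hf).2.2.1⟩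
  have hsign : ∀ f ∉ T, D f e1 = 0 → ∀ w, headChip ι f (D' f f) w = headChip ι f (D f f) w :=
    fun f hf h0 => (hfund f hf).headChip_eq_of_isOrientedBy hTacyc hf (hfund' f hf)
      (hD f hf).2.2.2 (hD' f hf).2.2.2 (by simpa [hrange] using hF _ (hD f hf).1)
      fun j hj => hs'i j fun hj0 => hj (by rwa [(Fin.ext hj0 : j = ⟨0, hpos⟩), ← he1])
  have hlead : ∀ f ∉ T, D f e1 ≠ 0 → D f e1 = 1 := fun f hf =>
    hs0 ▸ IsOrientedBy.apply_first (hD f hf).2.2.2 he1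
  have hlead' : ∀ f ∉ T, D' f e1 ≠ 0 → D' f e1 = -1 := fun f hf =>
    hs'0 ▸ IsOrientedBy.apply_first (hD' f hf).2.2.2 he1
  have hdiff : ∀ w, β w - β' w = ∑ f ∈ Finset.univ.filter (· ∉ T),
      (headChip ι f (D f f) w - headChip ι f (D' f f) w) := fun w => by
    rw [hβ, hβ', ← Finset.sum_sub_distrib]
    rfl
  have hinc : ∀ w, incidence ι e1 w = (if w = u then 1 else 0) - (if w = v then 1 else 0) := by
    simp [incidence, hvu, eq_comm]
  have hout : e1 ∉ T → ∀ w, β w - β' w = (if w = u then 1 else 0) - (if w = v then 1 else 0) :=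
    fun h1 w => by
      rw [hdiff, sum_headChip_sub_of_not_mem h1 hfund hsign (hlead _ h1 (hD _ h1).2.2.1)
        (hlead' _ h1 (hD' _ h1).2.2.1), hinc]
  have hin : e1 ∈ T → ∀ w, β w - β' w = incidence ι e1 w - lap ι (cutIndicator ι T e1) w :=
    fun h1 w => by rw [hdiff, sum_headChip_sub_of_mem hTacyc h1 hfund hfund' hsign hlead hlead']
  refine ⟨?_, hout, fun h1 w => ?_⟩
  · by_cases h1 : e1 ∈ T
    · exact ⟨_, fun w => by rw [hin h1, hinc]⟩
    · exact ⟨0, fun w => by simp [hout h1 w, lap]⟩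
  · rw [hin h1, hinc, cutIndicator, hvu]
    rfl

/-- let `β, β'` be the edge ordering maps with data
`e₁ < e₂ < ⋯ < e_h` and `ē₁ < e₂ < ⋯ < e_h` (the first edge `e₁ = (v,u)` reversed).
For each non-tree edge `f`, `D f` (resp. `D' f`) is its fundamental cycle in `T + f`,
oriented according to the smallest edge of the respective ordering it contains, and the
break divisor `β T` (resp. `β' T`) places a chip at the head of each non-tree edge.
Then `β T − β' T ≡ (u) − (v)` in `Pic⁰(G)`; explicitly it equals `(u) − (v)` if `e₁ ∉ T`,
and `(u) − (v) − Δχ_{U'}` if `e₁ ∈ T`, where `U'` is the component of `T − e₁`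
containing `u`. -/
theorem edge_ordering_torsor_translation (ι : E → V × V) (h : ℕ) (hpos : 0 < h)
    (F : Finset E)
    (hF : ∀ C : E → ℤ, IsCycleVec ι C → ∃ e, C e ≠ 0 ∧ e ∉ F)
    (ord : Fin h → E) (hinj : Function.Injective ord)
    (hrange : Set.range ord = {e | e ∉ F})
    (s s' : Fin h → ℤ)
    (hs : ∀ i, s i = 1 ∨ s i = -1)
    (hs0 : s ⟨0, hpos⟩ = 1)
    (hs'0 : s' ⟨0, hpos⟩ = -1)
    (hs'i : ∀ i : Fin h, (i : ℕ) ≠ 0 → s' i = s i)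
    (e1 : E) (he1 : e1 = ord ⟨0, hpos⟩)
    (v u : V) (hvu : ι e1 = (v, u))
    (T : Finset E) (hTconn : Conn ι ↑T)
    (hTacyc : ∀ C : E → ℤ, IsCycleVec ι C → ∃ e, C e ≠ 0 ∧ e ∉ T)
    (D D' : E → E → ℤ)
    (hD : ∀ f ∉ T, IsCycleVec ι (D f) ∧ (∀ e, D f e ≠ 0 → e ∈ T ∨ e = f) ∧ D f f ≠ 0 ∧
      (∀ i : Fin h, D f (ord i) ≠ 0 → (∀ j : Fin h, j < i → D f (ord j) = 0) →
        D f (ord i) = s i))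
    (hD' : ∀ f ∉ T, IsCycleVec ι (D' f) ∧ (∀ e, D' f e ≠ 0 → e ∈ T ∨ e = f) ∧ D' f f ≠ 0 ∧
      (∀ i : Fin h, D' f (ord i) ≠ 0 → (∀ j : Fin h, j < i → D' f (ord j) = 0) →
        D' f (ord i) = s' i))
    (β β' : V → ℤ)
    (hβ : ∀ w, β w = ∑ f ∈ Finset.univ.filter (· ∉ T),
        if D f f = 1 then (if (ι f).2 = w then 1 else 0) else (if (ι f).1 = w then 1 else 0))
    (hβ' : ∀ w, β' w = ∑ f ∈ Finset.univ.filter (· ∉ T),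
        if D' f f = 1 then (if (ι f).2 = w then 1 else 0) else (if (ι f).1 = w then 1 else 0)) :
    (∃ x : V → ℤ, ∀ w, β w - β' w =
        ((if w = u then 1 else 0) - (if w = v then 1 else 0)) - lap ι x w) ∧
    (e1 ∉ T → ∀ w, β w - β' w =
        (if w = u then 1 else 0) - (if w = v then 1 else 0)) ∧
    (e1 ∈ T → ∀ w, β w - β' w =
        ((if w = u then 1 else 0) - (if w = v then 1 else 0)) -
          lap ι (fun z => if ReachIn ι {g | g ∈ T ∧ g ≠ e1} u z then 1 else 0) w) :=
  edge_ordering_torsor_translation_general ι h hpos F hF ord hrange s s' hs0 hs'0 hs'i e1 he1 v u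
    hvu T hTacyc D D' hD hD' β β' hβ hβ'
end
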